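/- Let r > 3/2, tau >= 0, gamma >= 0. For functions f, g on T^3 write k = (k', k_3) with k' in 2\pi Z^2 and k_3 in 2\pi Z, and define the anisotropic Gevrey norm ||h||_{tau,r,gamma,r}^2 = sum_k (1 + |k'|^{2r} + |k_3|^{2r}) e^{2 tau |k'|} e^{2 gamma |k_3|} |\hat{h}_k|^2. Then ||f g||_{tau,r,gamma,r} <= C_r ||f||_{tau,r,gamma,r} ||g||_{tau,r,gamma,r}, so the corresponding space is a Banach algebra. -/

import Mathlib

open scoped ENNReal

/-- Euclidean norm of a horizontal lattice frequency `k' ∈ 2πℤ²`. -/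
noncomputable def hnorm (k' : Fin 2 → ℤ) : ℝ :=
  Real.sqrt (∑ a, ((2 * Real.pi) * (k' a : ℝ)) ^ 2)

/-- Absolute value of a vertical lattice frequency `k₃ ∈ 2πℤ`. -/
noncomputable def vnorm (k₃ : ℤ) : ℝ := |(2 * Real.pi) * (k₃ : ℝ)|

/-- Anisotropic Gevrey norm `‖f‖_{τ,r,γ,r}` of a function on `𝕋³` with Fourier
coefficients `c` indexed by `(k', k₃) ∈ 2π(ℤ² × ℤ)`. -/
noncomputable def anisoNorm (τ γ r : ℝ) (c : (Fin 2 → ℤ) × ℤ → ℂ) : ℝ≥0∞ :=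
  (∑' k : (Fin 2 → ℤ) × ℤ, ENNReal.ofReal
      ((1 + (hnorm k.1) ^ (2 * r) + (vnorm k.2) ^ (2 * r))
        * Real.exp (2 * τ * hnorm k.1) * Real.exp (2 * γ * vnorm k.2)
        * ‖c k‖ ^ 2)) ^ (1 / 2 : ℝ)

/-- Fourier coefficients of a product: convolution of the coefficients. -/
noncomputable def fconv (c d : (Fin 2 → ℤ) × ℤ → ℂ) (k : (Fin 2 → ℤ) × ℤ) : ℂ :=
  ∑' j, c j * d (k - j)

/-!
Write `σ(k) = √P(k) e(k)` with `P(k) = 1 + |k'|^{2r} + |k₃|^{2r}` and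
`e(k) = exp(τ|k'| + γ|k₃|)`, so that `‖h‖_{τ,r,γ,r}` is the `ℓ²` norm of `σ ĥ`. The
polynomial weight is quasi-additive, `P(j + l) ≤ 2^{2r-1} (P(j) + P(l))`, and `e` is
submultiplicative, hence `σ(j + l) ≤ 2^{r-1/2} (σ(j) e(l) + e(j) σ(l))`. Pointwise, `σ (f̂ * ĝ)`
is therefore bounded by `(σ f̂) * (e ĝ) + (e f̂) * (σ ĝ)`, and Young's inequality
`‖u * v‖₂ ≤ ‖u‖₁ ‖v‖₂` reduces everything to `‖e ĝ‖₁ ≤ (∑ 1/P)^{1/2} ‖σ ĝ‖₂` (Cauchy–Schwarz).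
Finally `∑ 1/P < ∞` because `1/P(k) ≲ ∏ᵢ (1 + |kᵢ|)^{-2r/3}` and `2r/3 > 1`.
-/

namespace ENNReal

lemma add_sq_le_two_mul (a b : ℝ≥0∞) : (a + b) ^ 2 ≤ 2 * (a ^ 2 + b ^ 2) := by
  have h := rpow_add_le_mul_rpow_add_rpow a b one_le_two
  norm_num only [rpow_two, rpow_one] at h
  exact h

lemma rpow_inv_two_sq (x : ℝ≥0∞) : (x ^ (2⁻¹ : ℝ)) ^ 2 = x := by
  simpa using rpow_inv_natCast_pow two_ne_zero x

lemma sq_rpow_inv_two (x : ℝ≥0∞) : (x ^ 2) ^ (2⁻¹ : ℝ) = x := by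
  simpa using pow_rpow_inv_natCast two_ne_zero x

variable {ι : Type*}

lemma sq_tsum_mul_le_tsum_sq_mul_tsum_sq (f g : ι → ℝ≥0∞) :
    (∑' i, f i * g i) ^ 2 ≤ (∑' i, f i ^ 2) * ∑' i, g i ^ 2 := by
  suffices h : ∑' i, f i * g i ≤ (∑' i, f i ^ 2) ^ (2⁻¹ : ℝ) * (∑' i, g i ^ 2) ^ (2⁻¹ : ℝ) by
    simpa only [mul_pow, rpow_inv_two_sq] using pow_le_pow_left' h 2
  refine ENNReal.summable.tsum_le_of_sum_le fun s => ?_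
  calc ∑ i ∈ s, f i * g i
      ≤ (∑ i ∈ s, f i ^ (2 : ℝ)) ^ (1 / 2 : ℝ) * (∑ i ∈ s, g i ^ (2 : ℝ)) ^ (1 / 2 : ℝ) :=
        inner_le_Lp_mul_Lq s f g Real.HolderConjugate.two_two
    _ ≤ _ := by
      simp only [rpow_two, one_div]
      gcongr <;> exact ENNReal.sum_le_tsum s

lemma sq_tsum_mul_le_tsum_mul_tsum_mul_sq (w f : ι → ℝ≥0∞) :
    (∑' i, w i * f i) ^ 2 ≤ (∑' i, w i) * ∑' i, w i * f i ^ 2 := by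
  suffices h : ∑' i, w i * f i ≤ (∑' i, w i) ^ (2⁻¹ : ℝ) * (∑' i, w i * f i ^ 2) ^ (2⁻¹ : ℝ) by
    simpa only [mul_pow, rpow_inv_two_sq] using pow_le_pow_left' h 2
  refine ENNReal.summable.tsum_le_of_sum_le fun s => ?_
  calc ∑ i ∈ s, w i * f i
      ≤ (∑ i ∈ s, w i) ^ (1 - (2 : ℝ)⁻¹) * (∑ i ∈ s, w i * f i ^ (2 : ℝ)) ^ (2 : ℝ)⁻¹ :=
        inner_le_weight_mul_Lp_of_nonneg s one_le_two w f
    _ ≤ _ := by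
      norm_num only [rpow_two]
      gcongr <;> exact ENNReal.sum_le_tsum s

lemma sq_tsum_mul_le_of_le_mul {ρ σ q : ι → ℝ≥0∞} (hρ : ∀ i, ρ i ≤ q i * σ i)
    (a : ι → ℝ≥0∞) : (∑' i, ρ i * a i) ^ 2 ≤ (∑' i, q i ^ 2) * ∑' i, (σ i * a i) ^ 2 := by
  calc (∑' i, ρ i * a i) ^ 2 ≤ (∑' i, q i * (σ i * a i)) ^ 2 := by
        refine pow_le_pow_left' (ENNReal.tsum_le_tsum fun i => ?_) 2
        rw [← mul_assoc]
        exact mul_le_mul_left (hρ i) _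
    _ ≤ _ := sq_tsum_mul_le_tsum_sq_mul_tsum_sq _ _

end ENNReal

section Convolution

variable {G : Type*} [AddCommGroup G]

noncomputable def dconv (f g : G → ℝ≥0∞) (k : G) : ℝ≥0∞ := ∑' j, f j * g (k - j)

lemma dconv_comm (f g : G → ℝ≥0∞) : dconv f g = dconv g f := by
  ext k
  rw [dconv, dconv, ← (Equiv.subLeft k).tsum_eq]
  simp only [Equiv.subLeft_apply, sub_sub_cancel, mul_comm]

/-- Young's inequality `‖f * g‖₂ ≤ ‖f‖₁ ‖g‖₂`. -/
lemma tsum_dconv_sq_le (f g : G → ℝ≥0∞) :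
    ∑' k, dconv f g k ^ 2 ≤ (∑' j, f j) ^ 2 * ∑' k, g k ^ 2 := by
  have htranslate (j : G) : ∑' k, g (k - j) ^ 2 = ∑' k, g k ^ 2 :=
    (Equiv.subRight j).tsum_eq fun k => g k ^ 2
  calc ∑' k, dconv f g k ^ 2
      ≤ ∑' k, (∑' j, f j) * ∑' j, f j * g (k - j) ^ 2 :=
        ENNReal.tsum_le_tsum fun k => ENNReal.sq_tsum_mul_le_tsum_mul_tsum_mul_sq _ _
    _ = (∑' j, f j) * ∑' j, f j * ∑' k, g (k - j) ^ 2 := by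
        rw [ENNReal.tsum_mul_left, ENNReal.tsum_comm]
        simp_rw [ENNReal.tsum_mul_left]
    _ = (∑' j, f j) ^ 2 * ∑' k, g k ^ 2 := by
        simp_rw [htranslate]
        rw [ENNReal.tsum_mul_right, sq, mul_assoc]

theorem tsum_sq_mul_dconv_le {σ ρ q : G → ℝ≥0∞} {B : ℝ≥0∞}
    (hσ : ∀ j l, σ (j + l) ≤ B * (σ j * ρ l + ρ j * σ l)) (hρ : ∀ k, ρ k ≤ q k * σ k)
    (a b : G → ℝ≥0∞) :
    ∑' k, (σ k * dconv a b k) ^ 2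
      ≤ 4 * B ^ 2 * (∑' k, q k ^ 2) * (∑' k, (σ k * a k) ^ 2) * ∑' k, (σ k * b k) ^ 2 := by
  set Q := ∑' k, q k ^ 2
  set Na := ∑' k, (σ k * a k) ^ 2
  set Nb := ∑' k, (σ k * b k) ^ 2
  set X := dconv (fun k => σ k * a k) (fun k => ρ k * b k) with hX
  set Y := dconv (fun k => ρ k * a k) (fun k => σ k * b k) with hY
  have hsplit (k : G) : σ k * dconv a b k ≤ B * (X k + Y k) := by
    calc σ k * dconv a b k = ∑' j, σ (j + (k - j)) * (a j * b (k - j)) := by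
          rw [dconv, ← ENNReal.tsum_mul_left]
          simp_rw [add_sub_cancel]
      _ ≤ ∑' j, B * (σ j * ρ (k - j) + ρ j * σ (k - j)) * (a j * b (k - j)) := by
          gcongr with j
          exact hσ _ _
      _ = B * (X k + Y k) := by
          rw [hX, hY, dconv, dconv, ← ENNReal.tsum_add, ← ENNReal.tsum_mul_left]
          congr 1; ext j; ring
  have hXsq : ∑' k, X k ^ 2 ≤ Q * Nb * Na := by
    calc ∑' k, X k ^ 2 ≤ (∑' k, ρ k * b k) ^ 2 * Na := by
          rw [hX, dconv_comm]
          exact tsum_dconv_sq_le _ _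
      _ ≤ Q * Nb * Na := by gcongr; exact ENNReal.sq_tsum_mul_le_of_le_mul hρ b
  have hYsq : ∑' k, Y k ^ 2 ≤ Q * Na * Nb := by
    calc ∑' k, Y k ^ 2 ≤ (∑' k, ρ k * a k) ^ 2 * Nb := tsum_dconv_sq_le _ _
      _ ≤ Q * Na * Nb := by gcongr; exact ENNReal.sq_tsum_mul_le_of_le_mul hρ a
  calc ∑' k, (σ k * dconv a b k) ^ 2 ≤ ∑' k, B ^ 2 * (2 * (X k ^ 2 + Y k ^ 2)) := by
        gcongr with k
        calc (σ k * dconv a b k) ^ 2 ≤ (B * (X k + Y k)) ^ 2 := pow_le_pow_left' (hsplit k) 2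
          _ = B ^ 2 * (X k + Y k) ^ 2 := mul_pow _ _ _
          _ ≤ _ := by gcongr; exact ENNReal.add_sq_le_two_mul _ _
    _ = 2 * B ^ 2 * (∑' k, X k ^ 2 + ∑' k, Y k ^ 2) := by
        rw [← ENNReal.tsum_add, ← ENNReal.tsum_mul_left]
        congr 1; ext k; ring
    _ ≤ 2 * B ^ 2 * (Q * Nb * Na + Q * Na * Nb) := by gcongr
    _ = 4 * B ^ 2 * Q * Na * Nb := by ring

end Convolution

namespace Real

lemma rpow_add_le_mul_rpow_add_rpow {a b p : ℝ} (ha : 0 ≤ a) (hb : 0 ≤ b) (hp : 1 ≤ p) :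
    (a + b) ^ p ≤ 2 ^ (p - 1) * (a ^ p + b ^ p) := by
  lift a to NNReal using ha
  lift b to NNReal using hb
  exact_mod_cast NNReal.rpow_add_le_mul_rpow_add_rpow a b hp

lemma rpow_le_mul_rpow_add_rpow_of_le_add {x a b p : ℝ} (hx : 0 ≤ x) (ha : 0 ≤ a)
    (hb : 0 ≤ b) (hab : x ≤ a + b) (hp : 1 ≤ p) : x ^ p ≤ 2 ^ (p - 1) * (a ^ p + b ^ p) :=
  (rpow_le_rpow hx hab (by linarith)).trans (rpow_add_le_mul_rpow_add_rpow ha hb hp)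

lemma sqrt_add_le_add_sqrt {x y : ℝ} (hx : 0 ≤ x) (hy : 0 ≤ y) : √(x + y) ≤ √x + √y := by
  rw [sqrt_le_left (by positivity), add_sq, sq_sqrt hx, sq_sqrt hy]
  nlinarith [mul_nonneg (sqrt_nonneg x) (sqrt_nonneg y)]

end Real

lemma summable_inv_one_add_abs_rpow {s : ℝ} (hs : 1 < s) :
    Summable fun n : ℤ => ((1 + |(n : ℝ)|) ^ s)⁻¹ := by
  refine ((Real.summable_one_div_int_add_rpow (1 / 2) s).2 hs).of_nonneg_of_le
    (fun n => by positivity) fun n => ?_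
  have hpos : 0 < |(n : ℝ) + 1 / 2| := by
    refine abs_pos.2 fun h => ?_
    have : 2 * n + 1 = 0 := by exact_mod_cast (by linarith : 2 * (n : ℝ) + 1 = 0)
    omega
  rw [one_div]
  gcongr
  calc |(n : ℝ) + 1 / 2| ≤ |(n : ℝ)| + |1 / 2| := abs_add_le _ _
    _ ≤ 1 + |(n : ℝ)| := by norm_num; linarith

namespace AnisoGevrey

lemma hnorm_nonneg (k' : Fin 2 → ℤ) : 0 ≤ hnorm k' := Real.sqrt_nonneg _

lemma vnorm_nonneg (k₃ : ℤ) : 0 ≤ vnorm k₃ := abs_nonneg _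

lemma hnorm_eq_norm (k' : Fin 2 → ℤ) :
    hnorm k' = ‖WithLp.toLp 2 fun a => 2 * Real.pi * (k' a : ℝ)‖ := by
  simp only [hnorm, EuclideanSpace.norm_eq, Real.norm_eq_abs, sq_abs]

lemma hnorm_add_le (x y : Fin 2 → ℤ) : hnorm (x + y) ≤ hnorm x + hnorm y := by
  simp only [hnorm_eq_norm]
  calc _ = ‖WithLp.toLp 2 (fun a => 2 * Real.pi * (x a : ℝ))
        + WithLp.toLp 2 (fun a => 2 * Real.pi * (y a : ℝ))‖ := by
        congr 1; ext a; simp only [Pi.add_apply, Int.cast_add, PiLp.add_apply]; ring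
    _ ≤ _ := norm_add_le _ _

lemma vnorm_add_le (x y : ℤ) : vnorm (x + y) ≤ vnorm x + vnorm y := by
  simpa only [vnorm, Int.cast_add, mul_add] using abs_add_le _ _

lemma abs_le_abs_two_pi_mul (x : ℝ) : |x| ≤ |2 * Real.pi * x| := by
  rw [abs_mul, abs_of_pos Real.two_pi_pos]
  nlinarith [Real.pi_gt_three, abs_nonneg x]

lemma abs_le_hnorm (k' : Fin 2 → ℤ) (a : Fin 2) : |(k' a : ℝ)| ≤ hnorm k' := by
  rw [hnorm_eq_norm]
  exact (abs_le_abs_two_pi_mul _).trans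
    (PiLp.norm_apply_le (WithLp.toLp 2 fun b => 2 * Real.pi * (k' b : ℝ)) a)

lemma abs_le_vnorm (k₃ : ℤ) : |(k₃ : ℝ)| ≤ vnorm k₃ := abs_le_abs_two_pi_mul _

local notation "ℤ³" => (Fin 2 → ℤ) × ℤ

noncomputable def polyWeight (r : ℝ) (k : ℤ³) : ℝ :=
  1 + hnorm k.1 ^ (2 * r) + vnorm k.2 ^ (2 * r)

noncomputable def expWeight (τ γ : ℝ) (k : ℤ³) : ℝ :=
  Real.exp (τ * hnorm k.1 + γ * vnorm k.2)

noncomputable def gevreyWeight (τ γ r : ℝ) (k : ℤ³) : ℝ :=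
  √(polyWeight r k) * expWeight τ γ k

lemma polyWeight_pos (r : ℝ) (k : ℤ³) : 0 < polyWeight r k := by
  have := Real.rpow_nonneg (hnorm_nonneg k.1) (2 * r)
  have := Real.rpow_nonneg (vnorm_nonneg k.2) (2 * r)
  rw [polyWeight]
  linarith

lemma expWeight_pos (τ γ : ℝ) (k : ℤ³) : 0 < expWeight τ γ k := Real.exp_pos _

lemma gevreyWeight_nonneg (τ γ r : ℝ) (k : ℤ³) : 0 ≤ gevreyWeight τ γ r k :=
  mul_nonneg (Real.sqrt_nonneg _) (expWeight_pos τ γ k).le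

lemma polyWeight_add_le {r : ℝ} (hr : 1 / 2 ≤ r) (j l : ℤ³) :
    polyWeight r (j + l) ≤ 2 ^ (2 * r - 1) * (polyWeight r j + polyWeight r l) := by
  have hp : 1 ≤ 2 * r := by linarith
  have hc : 1 ≤ (2 : ℝ) ^ (2 * r - 1) := Real.one_le_rpow one_le_two (by linarith)
  have hh := Real.rpow_le_mul_rpow_add_rpow_of_le_add (hnorm_nonneg _) (hnorm_nonneg _)
    (hnorm_nonneg _) (hnorm_add_le j.1 l.1) hp
  have hv := Real.rpow_le_mul_rpow_add_rpow_of_le_add (vnorm_nonneg _) (vnorm_nonneg _)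
    (vnorm_nonneg _) (vnorm_add_le j.2 l.2) hp
  simp only [polyWeight, Prod.fst_add, Prod.snd_add]
  linarith

lemma expWeight_add_le {τ γ : ℝ} (hτ : 0 ≤ τ) (hγ : 0 ≤ γ) (j l : ℤ³) :
    expWeight τ γ (j + l) ≤ expWeight τ γ j * expWeight τ γ l := by
  rw [expWeight, expWeight, expWeight, ← Real.exp_add, Real.exp_le_exp, Prod.fst_add,
    Prod.snd_add]
  have := mul_le_mul_of_nonneg_left (hnorm_add_le j.1 l.1) hτ
  have := mul_le_mul_of_nonneg_left (vnorm_add_le j.2 l.2) hγ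
  linarith

lemma gevreyWeight_add_le {τ γ r : ℝ} (hr : 1 / 2 ≤ r) (hτ : 0 ≤ τ) (hγ : 0 ≤ γ) (j l : ℤ³) :
    gevreyWeight τ γ r (j + l) ≤ √(2 ^ (2 * r - 1))
      * (gevreyWeight τ γ r j * expWeight τ γ l + expWeight τ γ j * gevreyWeight τ γ r l) := by
  have hsqrt : √(polyWeight r (j + l))
      ≤ √(2 ^ (2 * r - 1)) * (√(polyWeight r j) + √(polyWeight r l)) := by
    calc √(polyWeight r (j + l)) ≤ √(2 ^ (2 * r - 1) * (polyWeight r j + polyWeight r l)) :=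
          Real.sqrt_le_sqrt (polyWeight_add_le hr j l)
      _ = √(2 ^ (2 * r - 1)) * √(polyWeight r j + polyWeight r l) :=
          Real.sqrt_mul (by positivity) _
      _ ≤ _ := by
          gcongr
          exact Real.sqrt_add_le_add_sqrt (polyWeight_pos r j).le (polyWeight_pos r l).le
  calc gevreyWeight τ γ r (j + l)
      ≤ √(2 ^ (2 * r - 1)) * (√(polyWeight r j) + √(polyWeight r l))
        * (expWeight τ γ j * expWeight τ γ l) := by
        rw [gevreyWeight]
        gcongr
        · exact (expWeight_pos τ γ _).le
        · exact expWeight_add_le hτ hγ j l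
    _ = _ := by simp only [gevreyWeight]; ring

lemma ofReal_gevreyWeight_add_le {τ γ r : ℝ} (hr : 1 / 2 ≤ r) (hτ : 0 ≤ τ) (hγ : 0 ≤ γ)
    (j l : ℤ³) :
    ENNReal.ofReal (gevreyWeight τ γ r (j + l)) ≤ ENNReal.ofReal √(2 ^ (2 * r - 1))
      * (ENNReal.ofReal (gevreyWeight τ γ r j) * ENNReal.ofReal (expWeight τ γ l)
        + ENNReal.ofReal (expWeight τ γ j) * ENNReal.ofReal (gevreyWeight τ γ r l)) := by
  have := gevreyWeight_nonneg τ γ r j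
  have := gevreyWeight_nonneg τ γ r l
  have := expWeight_pos τ γ j
  have := expWeight_pos τ γ l
  rw [← ENNReal.ofReal_mul (by positivity), ← ENNReal.ofReal_mul (by positivity),
    ← ENNReal.ofReal_add (by positivity) (by positivity), ← ENNReal.ofReal_mul (by positivity)]
  exact ENNReal.ofReal_le_ofReal (gevreyWeight_add_le hr hτ hγ j l)

lemma ofReal_expWeight_eq (τ γ r : ℝ) (k : ℤ³) :
    ENNReal.ofReal (expWeight τ γ k)
      = ENNReal.ofReal (√(polyWeight r k))⁻¹ * ENNReal.ofReal (gevreyWeight τ γ r k) := by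
  have := polyWeight_pos r k
  rw [← ENNReal.ofReal_mul (by positivity), gevreyWeight, inv_mul_cancel_left₀ (by positivity)]

lemma one_add_rpow_le_polyWeight {r m : ℝ} (hr : 1 / 2 ≤ r) (hm : 0 ≤ m) {k : ℤ³}
    (hmk : m ≤ hnorm k.1 ∨ m ≤ vnorm k.2) :
    (1 + m) ^ (2 * r) ≤ 2 ^ (2 * r - 1) * polyWeight r k := by
  have hmP : m ^ (2 * r) ≤ hnorm k.1 ^ (2 * r) + vnorm k.2 ^ (2 * r) := by
    have := Real.rpow_nonneg (hnorm_nonneg k.1) (2 * r)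
    have := Real.rpow_nonneg (vnorm_nonneg k.2) (2 * r)
    rcases hmk with h | h
    · linarith [Real.rpow_le_rpow hm h (by linarith : 0 ≤ 2 * r)]
    · linarith [Real.rpow_le_rpow hm h (by linarith : 0 ≤ 2 * r)]
  calc (1 + m) ^ (2 * r) ≤ 2 ^ (2 * r - 1) * (1 ^ (2 * r) + m ^ (2 * r)) :=
        Real.rpow_add_le_mul_rpow_add_rpow zero_le_one hm (by linarith)
    _ ≤ 2 ^ (2 * r - 1) * polyWeight r k := by
        rw [Real.one_rpow, polyWeight]
        exact mul_le_mul_of_nonneg_left (by linarith) (by positivity)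

/-- Multiply the cube roots of the bounds `one_add_rpow_le_polyWeight` for the three
coordinates of `k`. -/
lemma polyWeight_inv_le {r : ℝ} (hr : 1 / 2 ≤ r) (k : ℤ³) :
    (polyWeight r k)⁻¹ ≤ 2 ^ (2 * r - 1) * (((1 + |(k.1 0 : ℝ)|) ^ (2 * r / 3))⁻¹
      * ((1 + |(k.1 1 : ℝ)|) ^ (2 * r / 3))⁻¹ * ((1 + |(k.2 : ℝ)|) ^ (2 * r / 3))⁻¹) := by
  set M := 2 ^ (2 * r - 1) * polyWeight r k
  have hM : 0 < M := by have := polyWeight_pos r k; positivity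
  have hcube {m : ℝ} (hm : 0 ≤ m) (hmk : m ≤ hnorm k.1 ∨ m ≤ vnorm k.2) :
      ((1 + m) ^ (2 * r / 3)) ^ 3 ≤ M := by
    rw [← Real.rpow_mul_natCast (by positivity)]
    convert one_add_rpow_le_polyWeight hr hm hmk using 2
    ring
  have hprod : (1 + |(k.1 0 : ℝ)|) ^ (2 * r / 3) * (1 + |(k.1 1 : ℝ)|) ^ (2 * r / 3)
      * (1 + |(k.2 : ℝ)|) ^ (2 * r / 3) ≤ M := by
    refine le_of_pow_le_pow_left₀ three_ne_zero hM.le ?_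
    rw [mul_pow, mul_pow, show M ^ 3 = M * M * M by ring]
    gcongr
    · exact hcube (abs_nonneg _) (.inl (abs_le_hnorm k.1 0))
    · exact hcube (abs_nonneg _) (.inl (abs_le_hnorm k.1 1))
    · exact hcube (abs_nonneg _) (.inr (abs_le_vnorm k.2))
  calc (polyWeight r k)⁻¹ = 2 ^ (2 * r - 1) * M⁻¹ := by
        rw [mul_inv, ← mul_assoc, mul_inv_cancel₀ (by positivity), one_mul]
    _ ≤ _ := by
        rw [← mul_inv, ← mul_inv]
        gcongr

lemma summable_polyWeight_inv {r : ℝ} (hr : 3 / 2 < r) :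
    Summable fun k : ℤ³ => (polyWeight r k)⁻¹ := by
  set u : ℤ → ℝ := fun n => ((1 + |(n : ℝ)|) ^ (2 * r / 3))⁻¹
  have hu : Summable u := summable_inv_one_add_abs_rpow (by linarith)
  have hu0 : 0 ≤ u := fun n => by positivity
  have hpair : Summable fun x : Fin 2 → ℤ => u (x 0) * u (x 1) :=
    (piFinTwoEquiv fun _ => ℤ).summable_iff.2 (hu.mul_of_nonneg hu hu0 hu0)
  have htriple : Summable fun k : ℤ³ => u (k.1 0) * u (k.1 1) * u k.2 :=
    hpair.mul_of_nonneg hu (fun x => mul_nonneg (hu0 _) (hu0 _)) hu0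
  exact (htriple.mul_left _).of_nonneg_of_le (fun k => (inv_pos.2 (polyWeight_pos r k)).le)
    (polyWeight_inv_le (by linarith))

lemma anisoNorm_eq (τ γ r : ℝ) (c : ℤ³ → ℂ) :
    anisoNorm τ γ r c
      = (∑' k, (ENNReal.ofReal (gevreyWeight τ γ r k) * ‖c k‖ₑ) ^ 2) ^ (2⁻¹ : ℝ) := by
  rw [anisoNorm, one_div]
  congr 1
  refine tsum_congr fun k => ?_
  have := gevreyWeight_nonneg τ γ r k
  rw [← ofReal_norm, ← ENNReal.ofReal_mul this, ← ENNReal.ofReal_pow (by positivity)]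
  congr 1
  rw [gevreyWeight, expWeight, mul_pow, mul_pow, Real.sq_sqrt (polyWeight_pos r k).le,
    ← Real.exp_nat_mul, polyWeight]
  simp only [Nat.cast_ofNat, mul_add, Real.exp_add, ← mul_assoc]

lemma enorm_fconv_le (c d : ℤ³ → ℂ) (k : ℤ³) :
    ‖fconv c d k‖ₑ ≤ dconv (fun j => ‖c j‖ₑ) (fun j => ‖d j‖ₑ) k := by
  simpa only [fconv, dconv, enorm_mul] using
    enorm_tsum_le_tsum_enorm (f := fun j => c j * d (k - j))

theorem anisoNorm_fconv_le {τ γ r : ℝ} (hr : 1 / 2 ≤ r) (hτ : 0 ≤ τ) (hγ : 0 ≤ γ)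
    (hsum : Summable fun k : ℤ³ => (polyWeight r k)⁻¹) (c d : ℤ³ → ℂ) :
    anisoNorm τ γ r (fconv c d)
      ≤ ENNReal.ofReal (2 * √(2 ^ (2 * r - 1)) * √(∑' k, (polyWeight r k)⁻¹))
        * anisoNorm τ γ r c * anisoNorm τ γ r d := by
  set Q := ∑' k, (polyWeight r k)⁻¹
  set b := √(2 ^ (2 * r - 1))
  have hq : ∑' k, ENNReal.ofReal (√(polyWeight r k))⁻¹ ^ 2 = ENNReal.ofReal Q := by
    rw [ENNReal.ofReal_tsum_of_nonneg (fun k => (inv_pos.2 (polyWeight_pos r k)).le) hsum]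
    refine tsum_congr fun k => ?_
    rw [← ENNReal.ofReal_pow (by positivity), inv_pow, Real.sq_sqrt (polyWeight_pos r k).le]
  have hQ : 0 ≤ Q := tsum_nonneg fun k => (inv_pos.2 (polyWeight_pos r k)).le
  have hconst :
      4 * ENNReal.ofReal b ^ 2 * ENNReal.ofReal Q = ENNReal.ofReal (2 * b * √Q) ^ 2 := by
    rw [ENNReal.ofReal_mul (by positivity), ENNReal.ofReal_mul (by positivity), mul_pow,
      mul_pow, ← ENNReal.ofReal_pow (Real.sqrt_nonneg Q), Real.sq_sqrt hQ]
    norm_num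
  have key := tsum_sq_mul_dconv_le (ofReal_gevreyWeight_add_le hr hτ hγ)
    (fun k => (ofReal_expWeight_eq τ γ r k).le) (fun j => ‖c j‖ₑ) (fun j => ‖d j‖ₑ)
  rw [hq, hconst] at key
  rw [anisoNorm_eq, anisoNorm_eq, anisoNorm_eq]
  calc _ ≤ (∑' k, (ENNReal.ofReal (gevreyWeight τ γ r k)
          * dconv (fun j => ‖c j‖ₑ) (fun j => ‖d j‖ₑ) k) ^ 2) ^ (2⁻¹ : ℝ) := by
        gcongr with k
        exact enorm_fconv_le c d k
    _ ≤ _ := ENNReal.rpow_le_rpow key (by norm_num)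
    _ = _ := by
        rw [ENNReal.mul_rpow_of_nonneg _ _ (by norm_num),
          ENNReal.mul_rpow_of_nonneg _ _ (by norm_num), ENNReal.sq_rpow_inv_two]

end AnisoGevrey

/-- Banach algebra property of the anisotropic Gevrey space for `r > 3/2`:
`‖fg‖_{τ,r,γ,r} ≤ C_r ‖f‖_{τ,r,γ,r} ‖g‖_{τ,r,γ,r}`. -/
theorem aniso_gevrey_banach_algebra (r : ℝ) (hr : 3 / 2 < r) :
    ∃ C : ℝ, 0 < C ∧ ∀ τ γ : ℝ, 0 ≤ τ → 0 ≤ γ → ∀ c d : (Fin 2 → ℤ) × ℤ → ℂ,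
      anisoNorm τ γ r c < ⊤ → anisoNorm τ γ r d < ⊤ →
      anisoNorm τ γ r (fconv c d)
        ≤ ENNReal.ofReal C * anisoNorm τ γ r c * anisoNorm τ γ r d := by
  have hsum := AnisoGevrey.summable_polyWeight_inv hr
  have hpos := AnisoGevrey.polyWeight_pos r
  have hQ : 0 < ∑' k, (AnisoGevrey.polyWeight r k)⁻¹ :=
    hsum.tsum_pos (fun k => (inv_pos.2 (hpos k)).le) 0 (inv_pos.2 (hpos 0))
  exact ⟨_, mul_pos (by positivity) (Real.sqrt_pos.2 hQ),
    fun τ γ hτ hγ c d _ _ => AnisoGevrey.anisoNorm_fconv_le (by linarith) hτ hγ hsum c d⟩
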